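/- arXiv:2108.12400 — 4 statements merged into one kernel-verified Lean document; each statement's English description precedes it below -/
import Mathlib

section
/- Let x = (x₁,x₂), y = (y₁,y₂), z = (z₁,z₂) be three pairwise distinct points of K². Then ‖x−y‖₁ = ‖x−z‖₁ + ‖y−z‖₁ holds if and only if z shares one coordinate with x and the other one with y, i.e., if and only if (x₁ = z₁ and y₂ = z₂) or (y₁ = z₁ and x₂ = z₂). -/
/-!
An ultrametric valuation is an absolute value, and for it the triangle inequality
`|a + b| ≤ |a| + |b|` is strict unless `a = 0` or `b = 0`, since `|a + b| ≤ max |a| |b|`.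
Both coordinatewise triangle inequalities `|x_i - y_i| ≤ |x_i - z_i| + |y_i - z_i|` must
therefore be equalities, so in each coordinate `z` agrees with `x` or with `y`; as `z` differs
from both points, it agrees with `x` in one coordinate and with `y` in the other.
-/

section

variable {R S : Type*}

def AbsoluteValue.ofIsNonarchimedean [Semiring R] [Semiring S] [LinearOrder S]
    [IsStrictOrderedRing S] (v : R → S) (hnonneg : ∀ a, 0 ≤ v a) (hzero : ∀ a, v a = 0 ↔ a = 0)
    (hmul : ∀ a b, v (a * b) = v a * v b) (hna : IsNonarchimedean v) : AbsoluteValue R S where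
  toFun := v
  map_mul' := hmul
  nonneg' := hnonneg
  eq_zero' := hzero
  add_le' _ _ := hna.add_le hnonneg

namespace IsNonarchimedean

theorem absoluteValue_add_eq_add_iff [Semiring R] [Semiring S] [LinearOrder S]
    [IsStrictOrderedRing S] {abv : AbsoluteValue R S} (hna : IsNonarchimedean abv) (a b : R) :
    abv (a + b) = abv a + abv b ↔ a = 0 ∨ b = 0 := by
  constructor
  · intro h
    by_contra! hab
    have hle : abv a + abv b ≤ max (abv a) (abv b) := h ▸ hna a b
    exact hle.not_gt <| max_lt (lt_add_of_pos_right _ (abv.pos hab.2))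
      (lt_add_of_pos_left _ (abv.pos hab.1))
  · rintro (rfl | rfl) <;> simp

theorem absoluteValue_sub_eq_add_sub_iff [Ring R] [CommRing S] [LinearOrder S]
    [IsStrictOrderedRing S] {abv : AbsoluteValue R S} (hna : IsNonarchimedean abv) (x y z : R) :
    abv (x - y) = abv (x - z) + abv (y - z) ↔ x = z ∨ y = z := by
  rw [abv.map_sub y z, ← sub_add_sub_cancel x z y, hna.absoluteValue_add_eq_add_iff,
    sub_eq_zero, sub_eq_zero, eq_comm (a := z)]

end IsNonarchimedean

end

theorem stmt_0_general {K : Type*} [Field K] (v : K → ℝ)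
    (hnonneg : ∀ a : K, 0 ≤ v a)
    (hzero : ∀ a : K, v a = 0 ↔ a = 0)
    (hmul : ∀ a b : K, v (a * b) = v a * v b)
    (hultra : ∀ a b : K, v (a + b) ≤ max (v a) (v b))
    (x y z : K × K) (hxz : x ≠ z) (hyz : y ≠ z) :
    (v (x.1 - y.1) + v (x.2 - y.2)
      = (v (x.1 - z.1) + v (x.2 - z.2)) + (v (y.1 - z.1) + v (y.2 - z.2)))
    ↔ ((x.1 = z.1 ∧ y.2 = z.2) ∨ (y.1 = z.1 ∧ x.2 = z.2)) := by
  set abv := AbsoluteValue.ofIsNonarchimedean v hnonneg hzero hmul hultra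
  have hna : IsNonarchimedean abv := hultra
  have triangle (a b c : K) : abv (a - b) ≤ abv (a - c) + abv (b - c) :=
    abv.map_sub b c ▸ abv.sub_le a c b
  change abv _ + abv _ = (abv _ + abv _) + (abv _ + abv _) ↔ _
  rw [add_add_add_comm, add_eq_add_iff_eq_and_eq (triangle _ _ _) (triangle _ _ _),
    hna.absoluteValue_sub_eq_add_sub_iff, hna.absoluteValue_sub_eq_add_sub_iff]
  rw [Ne, Prod.ext_iff] at hxz hyz
  tauto

/-- Lemma `oxy`: for pairwise distinct `x, y, z ∈ K²`,
`‖x−y‖₁ = ‖x−z‖₁ + ‖y−z‖₁` iff `z` shares one coordinate with `x` and the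
other with `y`. -/
theorem stmt_0 {K : Type*} [Field K] (v : K → ℝ)
    (hnonneg : ∀ a : K, 0 ≤ v a)
    (hzero : ∀ a : K, v a = 0 ↔ a = 0)
    (hmul : ∀ a b : K, v (a * b) = v a * v b)
    (hultra : ∀ a b : K, v (a + b) ≤ max (v a) (v b))
    (x y z : K × K) (hxy : x ≠ y) (hxz : x ≠ z) (hyz : y ≠ z) :
    (v (x.1 - y.1) + v (x.2 - y.2)
      = (v (x.1 - z.1) + v (x.2 - z.2)) + (v (y.1 - z.1) + v (y.2 - z.2)))
    ↔ ((x.1 = z.1 ∧ y.2 = z.2) ∨ (y.1 = z.1 ∧ x.2 = z.2)) :=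
  stmt_0_general v hnonneg hzero hmul hultra x y z hxz hyz
end

section
/- Let x = (x₁,…,xₙ), y = (y₁,…,yₙ), z = (z₁,…,zₙ) ∈ Kⁿ. Then ‖x−y‖₁ = ‖x−z‖₁ + ‖y−z‖₁ holds if and only if zᵢ ∈ {xᵢ, yᵢ} for every i = 1,…,n. -/
/-!
Coordinatewise, `|a - b| ≤ max (|a - c|, |b - c|)` by the ultrametric inequality, so
`|a - b| = |a - c| + |b - c|` forces `min (|a - c|, |b - c|) = 0`, i.e. `c ∈ {a, b}`.
Since the triangle inequality holds in every coordinate, equality of the sums is equality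
in every coordinate.
-/

namespace AbsoluteValue

def ofIsNonarchimedean_s2 {R S : Type*} [Semiring R] [Semiring S] [LinearOrder S]
    [IsStrictOrderedRing S] (v : R → S) (nonneg : ∀ a, 0 ≤ v a) (eq_zero : ∀ a, v a = 0 ↔ a = 0)
    (map_mul : ∀ a b, v (a * b) = v a * v b) (hna : IsNonarchimedean v) : AbsoluteValue R S where
  toFun := v
  map_mul' := map_mul
  nonneg' := nonneg
  eq_zero' := eq_zero
  add_le' _ _ := hna.add_le nonneg

variable {R S : Type*} [Ring R] [CommRing S] [LinearOrder S] [IsStrictOrderedRing S]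
  (abv : AbsoluteValue R S)

theorem sub_le_sub_add_sub (a b c : R) : abv (a - b) ≤ abv (a - c) + abv (b - c) :=
  abv.map_sub b c ▸ abv.sub_le a c b

theorem sub_eq_sub_add_sub_iff (hna : IsNonarchimedean abv) {a b c : R} :
    abv (a - b) = abv (a - c) + abv (b - c) ↔ c = a ∨ c = b := by
  constructor
  · intro h
    have hmax : abv (a - b) ≤ max (abv (a - c)) (abv (b - c)) := by
      simpa [abv.map_sub c b] using hna (a - c) (c - b)
    have hmin : min (abv (a - c)) (abv (b - c)) = 0 :=
      le_antisymm (by linarith [min_add_max (abv (a - c)) (abv (b - c))])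
        (le_min (abv.nonneg _) (abv.nonneg _))
    rcases min_eq_iff.mp hmin with ⟨h0, -⟩ | ⟨h0, -⟩
    · exact .inl (sub_eq_zero.mp (abv.eq_zero.mp h0)).symm
    · exact .inr (sub_eq_zero.mp (abv.eq_zero.mp h0)).symm
  · rintro (rfl | rfl)
    · simp [abv.map_sub]
    · simp

theorem sum_sub_eq_sum_sub_add_sum_sub_iff (hna : IsNonarchimedean abv) {ι : Type*} [Fintype ι]
    (x y z : ι → R) :
    ∑ i, abv (x i - y i) = ∑ i, abv (x i - z i) + ∑ i, abv (y i - z i) ↔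
      ∀ i, z i = x i ∨ z i = y i := by
  rw [← Finset.sum_add_distrib,
    Finset.sum_eq_sum_iff_of_le fun i _ ↦ abv.sub_le_sub_add_sub (x i) (y i) (z i)]
  simp only [Finset.mem_univ, true_implies, abv.sub_eq_sub_add_sub_iff hna]

end AbsoluteValue

/-- Lemma `ndimensional`: for `x, y, z ∈ Kⁿ`,
`‖x−y‖₁ = ‖x−z‖₁ + ‖y−z‖₁` iff `zᵢ ∈ {xᵢ, yᵢ}` for every `i`. -/
theorem stmt_2 {K : Type*} [Field K] (v : K → ℝ)
    (hnonneg : ∀ a : K, 0 ≤ v a)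
    (hzero : ∀ a : K, v a = 0 ↔ a = 0)
    (hmul : ∀ a b : K, v (a * b) = v a * v b)
    (hultra : ∀ a b : K, v (a + b) ≤ max (v a) (v b))
    (n : ℕ) (x y z : Fin n → K) :
    (∑ i, v (x i - y i) = (∑ i, v (x i - z i)) + ∑ i, v (y i - z i))
    ↔ (∀ i, z i = x i ∨ z i = y i) :=
  (AbsoluteValue.ofIsNonarchimedean_s2 v hnonneg hzero hmul hultra).sum_sub_eq_sum_sub_add_sum_sub_iff
    hultra x y z
end

section
/- Let φ : (K²,‖·‖₁) → (K²,‖·‖₁) be a bijective isometry. Then there exist (α,β) ∈ K² and bijective isometries τ₁, τ₂ : K → K of (K, |·|) such that either φ(a,b) = (α,β) + (τ₁(a), τ₂(b)) for all (a,b) ∈ K², or φ(a,b) = (α,β) + (τ₁(b), τ₂(a)) for all (a,b) ∈ K². -/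
/-!
An isometry of `(K², ‖·‖₁)` preserves metric betweenness. Because `|·|` is ultrametric, the only
points between two points of `K` are the points themselves; hence two distinct points of `K²` have
no third point between them exactly when they lie on a common horizontal or vertical line. So an
isometry is an automorphism of the rook's graph on `K × K`. Such an automorphism either keeps the
directions of all edges or swaps the directions of all edges (this is forced at each vertex by the
non-adjacency of `(a, b')` and `(a', b)`, and the rook's graph has diameter two), which makes it a
product map, possibly composed with the swap of coordinates.
-/

open Function

section RookGraph

variable {α : Type*}

def AxisAligned (p q : α × α) : Prop :=
  p.1 = q.1 ∨ p.2 = q.2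

lemma AxisAligned.symm {p q : α × α} (h : AxisAligned p q) : AxisAligned q p :=
  h.imp Eq.symm Eq.symm

lemma axisAligned_swap_iff {p q : α × α} : AxisAligned p.swap q.swap ↔ AxisAligned p q :=
  or_comm

lemma axisAligned_iff_fst_eq_iff {p q r : α × α} (hq : AxisAligned p q) (hr : AxisAligned p r)
    (hpq : p ≠ q) (hpr : p ≠ r) : AxisAligned q r ↔ (p.1 = q.1 ↔ p.1 = r.1) := by
  obtain ⟨p1, p2⟩ := p
  obtain ⟨q1, q2⟩ := q
  obtain ⟨r1, r2⟩ := r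
  simp only [AxisAligned, ne_eq, Prod.mk.injEq] at *
  grind

def KeepsDirection (f : α × α → α × α) (p q : α × α) : Prop :=
  (p.1 = q.1 ↔ (f p).1 = (f q).1)

variable {f : α × α → α × α}

lemma keepsDirection_iff_of_common_vertex (hf : Injective f)
    (hal : ∀ p q, AxisAligned (f p) (f q) ↔ AxisAligned p q) {p q r : α × α}
    (hq : AxisAligned p q) (hr : AxisAligned p r) (hpq : p ≠ q) (hpr : p ≠ r) :
    KeepsDirection f p q ↔ KeepsDirection f p r := by
  have h := axisAligned_iff_fst_eq_iff hq hr hpq hpr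
  have h' := axisAligned_iff_fst_eq_iff ((hal p q).2 hq) ((hal p r).2 hr) (hf.ne hpq) (hf.ne hpr)
  rw [hal, h] at h'
  unfold KeepsDirection
  tauto

lemma keepsDirection_comm {p q : α × α} : KeepsDirection f p q ↔ KeepsDirection f q p := by
  simp only [KeepsDirection, eq_comm]

lemma keepsDirection_iff (hf : Injective f)
    (hal : ∀ p q, AxisAligned (f p) (f q) ↔ AxisAligned p q) {p q p' q' : α × α}
    (hq : AxisAligned p q) (hq' : AxisAligned p' q') (hpq : p ≠ q) (hpq' : p' ≠ q') :
    KeepsDirection f p q ↔ KeepsDirection f p' q' := by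
  have at_vertex := @keepsDirection_iff_of_common_vertex _ _ hf hal
  have along_edge : ∀ {x y : α × α}, AxisAligned x y → x ≠ y →
      (KeepsDirection f p q ↔ KeepsDirection f x y) → ∀ {z}, AxisAligned y z → y ≠ z →
      (KeepsDirection f p q ↔ KeepsDirection f y z) := fun hxy hxy' h _ hyz hyz' =>
    h.trans (keepsDirection_comm.trans (at_vertex hxy.symm hyz hxy'.symm hyz'))
  by_cases hpp' : p = p'
  · subst hpp'
    exact at_vertex hq hq' hpq hpq'
  by_cases hal' : AxisAligned p p'
  · exact along_edge hal' hpp' (at_vertex hq hal' hpq hpp') hq' hpq'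
  · have hp2 : p.2 ≠ p'.2 := fun h => hal' (Or.inr h)
    have hp1 : p.1 ≠ p'.1 := fun h => hal' (Or.inl h)
    have hpr : AxisAligned p (p.1, p'.2) := Or.inl rfl
    have hrp' : AxisAligned (p.1, p'.2) p' := Or.inr rfl
    have hpr' : p ≠ (p.1, p'.2) := by simpa [Prod.ext_iff] using hp2
    have hrp'' : (p.1, p'.2) ≠ p' := by simpa [Prod.ext_iff] using hp1
    exact along_edge hrp' hrp'' (along_edge hpr hpr' (at_vertex hq hpr hpq hpr') hrp' hrp'')
      hq' hpq'

lemma eq_prodMap_of_keepsDirection (hal : ∀ p q, AxisAligned p q → AxisAligned (f p) (f q))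
    (hkeep : ∀ p q, AxisAligned p q → p ≠ q → KeepsDirection f p q) :
    f = Prod.map (fun a => (f (a, a)).1) (fun b => (f (b, b)).2) := by
  funext ⟨a, b⟩
  refine Prod.ext ?_ ?_
  · by_cases hab : b = a
    · subst hab; rfl
    · exact (hkeep (a, b) (a, a) (Or.inl rfl) (by simpa using hab)).1 rfl
  · by_cases hab : a = b
    · subst hab; rfl
    · have hfst := (hkeep (a, b) (b, b) (Or.inr rfl) (by simpa using hab)).not.1 hab
      exact (hal (a, b) (b, b) (Or.inr rfl)).resolve_left hfst

lemma keepsDirection_swap_comp_iff (hf : Injective f)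
    (hal : ∀ p q, AxisAligned p q → AxisAligned (f p) (f q)) {p q : α × α}
    (hpq : AxisAligned p q) (hpq' : p ≠ q) :
    KeepsDirection (Prod.swap ∘ f) p q ↔ ¬KeepsDirection f p q := by
  have himage := hal p q hpq
  have hne : ¬((f p).1 = (f q).1 ∧ (f p).2 = (f q).2) := fun h => hf.ne hpq' (Prod.ext h.1 h.2)
  unfold AxisAligned at himage
  simp only [KeepsDirection, comp_apply, Prod.fst_swap]
  tauto

theorem exists_eq_prodMap_or_eq_swap_comp_prodMap (hf : Injective f)
    (hal : ∀ p q, AxisAligned (f p) (f q) ↔ AxisAligned p q) :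
    ∃ g h : α → α, f = Prod.map g h ∨ f = Prod.swap ∘ Prod.map g h := by
  by_cases hkeep : ∀ p q, AxisAligned p q → p ≠ q → KeepsDirection f p q
  · exact ⟨_, _, Or.inl (eq_prodMap_of_keepsDirection (fun p q => (hal p q).2) hkeep)⟩
  · push Not at hkeep
    obtain ⟨p₀, q₀, hpq₀, hpq₀', hflip⟩ := hkeep
    have hal' : ∀ p q, AxisAligned p q → AxisAligned ((Prod.swap ∘ f) p) ((Prod.swap ∘ f) q) :=
      fun p q hpq => axisAligned_swap_iff.2 ((hal p q).2 hpq)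
    have hkeep' : ∀ p q, AxisAligned p q → p ≠ q → KeepsDirection (Prod.swap ∘ f) p q :=
      fun p q hpq hpq' => (keepsDirection_swap_comp_iff hf (fun p q => (hal p q).2) hpq hpq').2
        fun hk => hflip ((keepsDirection_iff hf hal hpq hpq₀ hpq' hpq₀').1 hk)
    exact ⟨_, _, Or.inr (by
      rw [← eq_prodMap_of_keepsDirection hal' hkeep', ← comp_assoc, Prod.swap_swap_eq, id_comp])⟩

end RookGraph

section UltrametricL1

variable {K : Type*} [AddGroup K] {v : K → ℝ}

structure IsUltrametricAbs (v : K → ℝ) : Prop where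
  nonneg : ∀ a, 0 ≤ v a
  eq_zero_iff : ∀ a, v a = 0 ↔ a = 0
  add_le_max : ∀ a b, v (a + b) ≤ max (v a) (v b)

def l1Dist (v : K → ℝ) (p q : K × K) : ℝ :=
  v (p.1 - q.1) + v (p.2 - q.2)

lemma l1Dist_swap (p q : K × K) : l1Dist v p.swap q.swap = l1Dist v p q :=
  add_comm _ _

namespace IsUltrametricAbs

lemma map_zero (hv : IsUltrametricAbs v) : v 0 = 0 :=
  (hv.eq_zero_iff 0).2 rfl

lemma sub_le_add (hv : IsUltrametricAbs v) (a b c : K) : v (a - c) ≤ v (a - b) + v (b - c) := by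
  have h := hv.add_le_max (a - b) (b - c)
  rw [sub_add_sub_cancel] at h
  exact h.trans (max_le_add_of_nonneg (hv.nonneg _) (hv.nonneg _))

lemma eq_or_eq_of_add_eq (hv : IsUltrametricAbs v) {a x c : K}
    (h : v (a - x) + v (x - c) = v (a - c)) : x = a ∨ x = c := by
  by_contra! hx
  have hax : 0 < v (a - x) :=
    (hv.nonneg _).lt_of_ne' fun h0 => hx.1 (sub_eq_zero.1 ((hv.eq_zero_iff _).1 h0)).symm
  have hxc : 0 < v (x - c) :=
    (hv.nonneg _).lt_of_ne' fun h0 => hx.2 (sub_eq_zero.1 ((hv.eq_zero_iff _).1 h0))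
  have hle := hv.add_le_max (a - x) (x - c)
  rw [sub_add_sub_cancel] at hle
  have := max_lt (lt_add_of_pos_right _ hxc) (lt_add_of_pos_left _ hax)
  linarith

lemma eq_or_eq_of_between_of_fst_eq (hv : IsUltrametricAbs v) {p q r : K × K}
    (hpq : p.1 = q.1) (h : l1Dist v p r + l1Dist v r q = l1Dist v p q) : r = p ∨ r = q := by
  unfold l1Dist at h
  rw [hpq, sub_self, hv.map_zero] at h
  have htri := hv.sub_le_add p.2 r.2 q.2
  have h₁ := hv.nonneg (q.1 - r.1)
  have h₂ := hv.nonneg (r.1 - q.1)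
  have hr₁ : r.1 = q.1 := sub_eq_zero.1 ((hv.eq_zero_iff _).1 (by linarith))
  rcases hv.eq_or_eq_of_add_eq (a := p.2) (x := r.2) (c := q.2) (by linarith) with hr₂ | hr₂
  · exact Or.inl (Prod.ext (hr₁.trans hpq.symm) hr₂)
  · exact Or.inr (Prod.ext hr₁ hr₂)

lemma axisAligned_iff_between (hv : IsUltrametricAbs v) (p q : K × K) :
    AxisAligned p q ↔ ∀ r, l1Dist v p r + l1Dist v r q = l1Dist v p q → r = p ∨ r = q := by
  refine ⟨?_, fun h => ?_⟩
  · rintro (hpq | hpq) r hr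
    · exact hv.eq_or_eq_of_between_of_fst_eq hpq hr
    · have := hv.eq_or_eq_of_between_of_fst_eq (p := p.swap) (q := q.swap) (r := r.swap) hpq
        (by simpa only [l1Dist_swap] using hr)
      simpa only [Prod.swap_inj] using this
  · by_contra hpq
    have hbetween : l1Dist v p (p.1, q.2) + l1Dist v (p.1, q.2) q = l1Dist v p q := by
      simp only [l1Dist, sub_self, hv.map_zero]
      ring
    rcases h _ hbetween with hr | hr
    · exact hpq (Or.inr (Prod.ext_iff.1 hr).2.symm)
    · exact hpq (Or.inl (Prod.ext_iff.1 hr).1)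

lemma axisAligned_map_iff (hv : IsUltrametricAbs v) {φ : K × K → K × K} (hφ : Bijective φ)
    (hiso : ∀ p q, l1Dist v (φ p) (φ q) = l1Dist v p q) (p q : K × K) :
    AxisAligned (φ p) (φ q) ↔ AxisAligned p q := by
  rw [hv.axisAligned_iff_between, hv.axisAligned_iff_between]
  constructor
  · intro h r hr
    rw [← hiso p r, ← hiso r q, ← hiso p q] at hr
    simpa only [hφ.1.eq_iff] using h (φ r) hr
  · intro h r' hr'
    obtain ⟨r, rfl⟩ := hφ.2 r'
    rw [hiso, hiso, hiso] at hr'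
    exact (h r hr').imp (congrArg φ) (congrArg φ)

lemma bijective_isometry_of_prodMap (hv : IsUltrametricAbs v) {g h : K → K}
    (hbij : Bijective (Prod.map g h))
    (hiso : ∀ p q, l1Dist v (Prod.map g h p) (Prod.map g h q) = l1Dist v p q) :
    Bijective g ∧ Bijective h ∧
      (∀ a b, v (g a - g b) = v (a - b)) ∧ (∀ a b, v (h a - h b) = v (a - b)) := by
  obtain ⟨hg, hh⟩ := Prod.map_bijective.1 hbij
  refine ⟨hg, hh, fun a b => ?_, fun a b => ?_⟩
  · simpa [l1Dist, hv.map_zero] using hiso (a, 0) (b, 0)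
  · simpa [l1Dist, hv.map_zero] using hiso (0, a) (0, b)

end IsUltrametricAbs

end UltrametricL1

theorem stmt_4_general {K : Type*} [Field K] (v : K → ℝ)
    (hnonneg : ∀ a : K, 0 ≤ v a)
    (hzero : ∀ a : K, v a = 0 ↔ a = 0)
    (hultra : ∀ a b : K, v (a + b) ≤ max (v a) (v b))
    (φ : K × K → K × K) (hbij : Function.Bijective φ)
    (hiso : ∀ p q : K × K,
      v ((φ p).1 - (φ q).1) + v ((φ p).2 - (φ q).2)
        = v (p.1 - q.1) + v (p.2 - q.2)) :
    ∃ (α β : K) (τ₁ τ₂ : K → K),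
      Function.Bijective τ₁ ∧ Function.Bijective τ₂ ∧
      (∀ a b : K, v (τ₁ a - τ₁ b) = v (a - b)) ∧
      (∀ a b : K, v (τ₂ a - τ₂ b) = v (a - b)) ∧
      ((∀ a b : K, φ (a, b) = ((α, β) : K × K) + (τ₁ a, τ₂ b)) ∨
        (∀ a b : K, φ (a, b) = ((α, β) : K × K) + (τ₁ b, τ₂ a))) := by
  have hv : IsUltrametricAbs v := ⟨hnonneg, hzero, hultra⟩
  obtain ⟨g, h, rfl | rfl⟩ :=
    exists_eq_prodMap_or_eq_swap_comp_prodMap hbij.1 (hv.axisAligned_map_iff hbij hiso)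
  · obtain ⟨hg, hh, hgi, hhi⟩ := hv.bijective_isometry_of_prodMap hbij hiso
    exact ⟨0, 0, g, h, hg, hh, hgi, hhi, Or.inl fun a b => (zero_add _).symm⟩
  · obtain ⟨hg, hh, hgi, hhi⟩ := hv.bijective_isometry_of_prodMap
      (Prod.swap_bijective.comp hbij) fun p q => (l1Dist_swap _ _).trans (hiso p q)
    exact ⟨0, 0, h, g, hh, hg, hhi, hgi, Or.inr fun a b => (zero_add _).symm⟩

/-- hard direction of Proposition `MU`: every bijective isometry
of `(K², ‖·‖₁)` is of the form `(a,b) ↦ (α,β) + (τ₁ a, τ₂ b)` or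
`(a,b) ↦ (α,β) + (τ₁ b, τ₂ a)` for some bijective isometries `τ₁, τ₂` of `K`. -/
theorem stmt_4 {K : Type*} [Field K] (v : K → ℝ)
    (hnonneg : ∀ a : K, 0 ≤ v a)
    (hzero : ∀ a : K, v a = 0 ↔ a = 0)
    (hmul : ∀ a b : K, v (a * b) = v a * v b)
    (hultra : ∀ a b : K, v (a + b) ≤ max (v a) (v b))
    (φ : K × K → K × K) (hbij : Function.Bijective φ)
    (hiso : ∀ p q : K × K,
      v ((φ p).1 - (φ q).1) + v ((φ p).2 - (φ q).2)
        = v (p.1 - q.1) + v (p.2 - q.2)) :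
    ∃ (α β : K) (τ₁ τ₂ : K → K),
      Function.Bijective τ₁ ∧ Function.Bijective τ₂ ∧
      (∀ a b : K, v (τ₁ a - τ₁ b) = v (a - b)) ∧
      (∀ a b : K, v (τ₂ a - τ₂ b) = v (a - b)) ∧
      ((∀ a b : K, φ (a, b) = ((α, β) : K × K) + (τ₁ a, τ₂ b)) ∨
        (∀ a b : K, φ (a, b) = ((α, β) : K × K) + (τ₁ b, τ₂ a))) :=
  stmt_4_general v hnonneg hzero hultra φ hbij hiso
end

section
/- Let φ : (Kⁿ,‖·‖₁) → (Kⁿ,‖·‖₁) be a bijective isometry with φ(0) = 0, and let e₁,…,eₙ denote the standard basis of Kⁿ. Then there exists a permutation σ of {1,…,n} such that φ({λ eᵢ : λ ∈ K}) = {λ e_{σ(i)} : λ ∈ K} for every i = 1,…,n. -/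
/-!
A point `m` lies metrically between `x` and `y` in `(Kⁿ, ‖·‖₁)` iff every coordinate of `m`
equals the corresponding coordinate of `x` or of `y`: for an ultrametric absolute value,
`|a + b| = |a| + |b|` forces `a = 0` or `b = 0`. Hence `x` and `y` differ in at most one
coordinate iff no point other than `x` and `y` lies between them, a property that a bijective
isometry preserves. The axes are the points that differ from `0` in at most one coordinate, and
two nonzero such points lie on the same axis iff they differ in at most one coordinate, so a
bijective isometry fixing `0` permutes the axes.
-/

open Set

section Ultrametric

variable {K : Type*} [AddGroup K] {v : K → ℝ}

theorem ultrametric_le_add (hnonneg : ∀ a, 0 ≤ v a)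
    (hultra : ∀ a b, v (a + b) ≤ max (v a) (v b)) (a b : K) :
    v (a + b) ≤ v a + v b :=
  (hultra a b).trans <| max_le (le_add_of_nonneg_right (hnonneg b))
    (le_add_of_nonneg_left (hnonneg a))

theorem ultrametric_add_eq_add_iff (hnonneg : ∀ a, 0 ≤ v a) (hzero : ∀ a, v a = 0 ↔ a = 0)
    (hultra : ∀ a b, v (a + b) ≤ max (v a) (v b)) (a b : K) :
    v (a + b) = v a + v b ↔ a = 0 ∨ b = 0 := by
  constructor
  · intro h
    by_contra! hab
    have ha : 0 < v a := (hnonneg a).lt_of_ne' fun h => hab.1 ((hzero a).1 h)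
    have hb : 0 < v b := (hnonneg b).lt_of_ne' fun h => hab.2 ((hzero b).1 h)
    have := (hultra a b).trans_lt
      (max_lt (lt_add_of_pos_right (v a) hb) (lt_add_of_pos_left (v b) ha))
    linarith
  · rintro (rfl | rfl) <;> simp [(hzero 0).2 rfl]

end Ultrametric

section Coordinates

variable {ι M : Type*}

def CoordwiseBtw (x m y : ι → M) : Prop := ∀ i, m i = x i ∨ m i = y i

def DiffAtMostOne (x y : ι → M) : Prop := ∀ j k, j ≠ k → x j = y j ∨ x k = y k

def coordAxis [Zero M] (i : ι) : Set (ι → M) := {x | ∀ k, k ≠ i → x k = 0}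

theorem sum_add_sum_eq_sum_iff_coordwiseBtw [Fintype ι] [AddGroup M] {v : M → ℝ}
    (hnonneg : ∀ a, 0 ≤ v a) (hzero : ∀ a, v a = 0 ↔ a = 0)
    (hultra : ∀ a b, v (a + b) ≤ max (v a) (v b)) (x m y : ι → M) :
    ∑ i, v (x i - m i) + ∑ i, v (m i - y i) = ∑ i, v (x i - y i) ↔ CoordwiseBtw x m y := by
  have hle : ∀ i, v (x i - y i) ≤ v (x i - m i) + v (m i - y i) := fun i => by
    simpa using ultrametric_le_add hnonneg hultra (x i - m i) (m i - y i)
  have heq : ∀ i, v (x i - y i) = v (x i - m i) + v (m i - y i) ↔ m i = x i ∨ m i = y i :=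
    fun i => by
      simpa [sub_eq_zero, eq_comm] using
        ultrametric_add_eq_add_iff hnonneg hzero hultra (x i - m i) (m i - y i)
  rw [← Finset.sum_add_distrib, eq_comm,
    Finset.sum_eq_sum_iff_of_le fun i _ => hle i]
  simp only [Finset.mem_univ, forall_const, heq, CoordwiseBtw]

theorem diffAtMostOne_iff_forall_coordwiseBtw {x y : ι → M} :
    DiffAtMostOne x y ↔ ∀ m, CoordwiseBtw x m y → m = x ∨ m = y := by
  classical
  constructor
  · intro h m hm
    by_contra! hne
    obtain ⟨j, hj⟩ := Function.ne_iff.1 hne.1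
    obtain ⟨k, hk⟩ := Function.ne_iff.1 hne.2
    have hmj : m j = y j := (hm j).resolve_left hj
    have hmk : m k = x k := (hm k).resolve_right hk
    have hjk : j ≠ k := by rintro rfl; exact hk hmj
    rcases h j k hjk with h' | h'
    · exact hj (hmj.trans h'.symm)
    · exact hk (hmk.trans h')
  · intro h j k hjk
    by_contra! hne
    have hbtw : CoordwiseBtw x (Function.update y j (x j)) y := fun i => by
      rcases eq_or_ne i j with rfl | hi
      · simp
      · simp [hi]
    rcases h _ hbtw with h' | h'
    · exact hne.2 (by simpa [hjk.symm] using (congrFun h' k).symm)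
    · exact hne.1 (by simpa using congrFun h' j)

theorem diffAtMostOne_map_iff {φ : (ι → M) → (ι → M)} (hφ : Function.Bijective φ)
    (hbtw : ∀ x m y, CoordwiseBtw (φ x) (φ m) (φ y) ↔ CoordwiseBtw x m y) (x y : ι → M) :
    DiffAtMostOne (φ x) (φ y) ↔ DiffAtMostOne x y := by
  rw [diffAtMostOne_iff_forall_coordwiseBtw, diffAtMostOne_iff_forall_coordwiseBtw,
    hφ.2.forall]
  simp only [hbtw, hφ.1.eq_iff]

section Axes

variable [Zero M] {x y : ι → M} {i j : ι}

theorem zero_mem_coordAxis (i : ι) : (0 : ι → M) ∈ coordAxis i := fun _ _ => rfl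

theorem single_mem_coordAxis [DecidableEq ι] (i : ι) (a : M) : Pi.single i a ∈ coordAxis i :=
  fun _ hk => Pi.single_eq_of_ne hk _

theorem apply_ne_zero_of_mem_coordAxis (hx : x ≠ 0) (hxi : x ∈ coordAxis i) : x i ≠ 0 := by
  intro hxi0
  refine hx (funext fun k => ?_)
  rcases eq_or_ne k i with rfl | hk
  · exact hxi0
  · exact hxi k hk

theorem eq_of_mem_coordAxis (hx : x ≠ 0) (hxi : x ∈ coordAxis i) (hxj : x ∈ coordAxis j) :
    i = j :=
  by_contra fun hij => apply_ne_zero_of_mem_coordAxis hx hxi (hxj i hij)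

theorem diffAtMostOne_zero_iff (hx : x ≠ 0) : DiffAtMostOne 0 x ↔ ∃ i, x ∈ coordAxis i := by
  constructor
  · intro h
    obtain ⟨i, hi⟩ := Function.ne_iff.1 hx
    refine ⟨i, fun k hk => ?_⟩
    exact ((h i k hk.symm).resolve_left fun h' => hi h'.symm).symm
  · rintro ⟨i, hxi⟩ j k hjk
    rcases eq_or_ne j i with rfl | hj
    · exact .inr (hxi k hjk.symm).symm
    · exact .inl (hxi j hj).symm

theorem diffAtMostOne_iff_of_mem_coordAxis (hx : x ≠ 0) (hy : y ≠ 0) (hxi : x ∈ coordAxis i)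
    (hyj : y ∈ coordAxis j) : DiffAtMostOne x y ↔ i = j := by
  constructor
  · intro h
    by_contra hij
    rcases h i j hij with h' | h'
    · exact apply_ne_zero_of_mem_coordAxis hx hxi (h'.trans (hyj i hij))
    · exact apply_ne_zero_of_mem_coordAxis hy hyj ((hxi j (Ne.symm hij)).symm.trans h').symm
  · rintro rfl a b hab
    rcases eq_or_ne a i with rfl | ha
    · exact .inr ((hxi b hab.symm).trans (hyj b hab.symm).symm)
    · exact .inl ((hxi a ha).trans (hyj a ha).symm)

theorem mem_coordAxis_iff_of_mem (hx : x ≠ 0) (hy : y ≠ 0) (hyi : y ∈ coordAxis i) :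
    x ∈ coordAxis i ↔ DiffAtMostOne 0 x ∧ DiffAtMostOne x y := by
  rw [diffAtMostOne_zero_iff hx]
  constructor
  · intro hxi
    exact ⟨⟨i, hxi⟩, (diffAtMostOne_iff_of_mem_coordAxis hx hy hxi hyi).2 rfl⟩
  · rintro ⟨⟨k, hxk⟩, hxy⟩
    rwa [(diffAtMostOne_iff_of_mem_coordAxis hx hy hxk hyi).1 hxy] at hxk

theorem exists_map_mem_coordAxis_iff {φ : (ι → M) → (ι → M)} (hφ : Function.Injective φ)
    (hD : ∀ x y, DiffAtMostOne (φ x) (φ y) ↔ DiffAtMostOne x y) (h0 : φ 0 = 0) (hx : x ≠ 0) :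
    (∃ j, φ x ∈ coordAxis j) ↔ ∃ i, x ∈ coordAxis i := by
  have hφx : φ x ≠ 0 := fun h => hx (hφ (h.trans h0.symm))
  rw [← diffAtMostOne_zero_iff hφx, ← h0, hD, diffAtMostOne_zero_iff hx]

theorem image_coordAxis_eq {φ : (ι → M) → (ι → M)} (hφ : Function.Bijective φ)
    (hD : ∀ x y, DiffAtMostOne (φ x) (φ y) ↔ DiffAtMostOne x y) (h0 : φ 0 = 0) {x₀ : ι → M}
    (hx₀ : x₀ ≠ 0) (hx₀i : x₀ ∈ coordAxis i) (hφx₀ : φ x₀ ∈ coordAxis j) :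
    φ '' coordAxis i = coordAxis j := by
  have hne : ∀ {x}, x ≠ 0 → φ x ≠ 0 := fun hx h => hx (hφ.1 (h.trans h0.symm))
  suffices φ ⁻¹' coordAxis j = coordAxis i by rw [← this, image_preimage_eq _ hφ.2]
  ext x
  rcases eq_or_ne x 0 with rfl | hx
  · simp only [mem_preimage, h0, zero_mem_coordAxis]
  · rw [mem_preimage, mem_coordAxis_iff_of_mem (hne hx) (hne hx₀) hφx₀,
      mem_coordAxis_iff_of_mem hx hx₀ hx₀i, ← hD 0 x, ← hD x x₀, h0]

theorem exists_perm_image_coordAxis_eq [Nontrivial M] {φ : (ι → M) → (ι → M)}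
    (hφ : Function.Bijective φ) (hD : ∀ x y, DiffAtMostOne (φ x) (φ y) ↔ DiffAtMostOne x y)
    (h0 : φ 0 = 0) :
    ∃ σ : Equiv.Perm ι, ∀ i, φ '' coordAxis i = coordAxis (σ i) := by
  classical
  obtain ⟨a, ha⟩ := exists_ne (0 : M)
  have hsingle : ∀ i, Pi.single i a ≠ (0 : ι → M) := fun i => by simpa using ha
  choose σ hσ using fun i =>
    (exists_map_mem_coordAxis_iff hφ.1 hD h0 (hsingle i)).2 ⟨i, single_mem_coordAxis i a⟩
  have himage : ∀ i, φ '' coordAxis i = coordAxis (σ i) := fun i =>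
    image_coordAxis_eq hφ hD h0 (hsingle i) (single_mem_coordAxis i a) (hσ i)
  refine ⟨Equiv.ofBijective σ ⟨fun i i' h => ?_, fun j => ?_⟩, himage⟩
  · have hi : coordAxis i = (coordAxis i' : Set (ι → M)) :=
      image_injective.2 hφ.1 (by rw [himage, himage, h])
    exact eq_of_mem_coordAxis (hsingle i) (single_mem_coordAxis i a)
      (hi ▸ single_mem_coordAxis i a)
  · obtain ⟨x, hx⟩ := hφ.2 (Pi.single j a)
    have hx0 : x ≠ 0 := by
      rintro rfl
      exact hsingle j (hx.symm.trans h0)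
    obtain ⟨k, hk⟩ := (exists_map_mem_coordAxis_iff hφ.1 hD h0 hx0).1
      ⟨j, hx ▸ single_mem_coordAxis j a⟩
    have hjk : Pi.single j a ∈ coordAxis (σ k) := himage k ▸ ⟨x, hk, hx⟩
    exact ⟨k, eq_of_mem_coordAxis (hsingle j) hjk (single_mem_coordAxis j a)⟩

end Axes

end Coordinates

theorem range_smul_single_one_eq_coordAxis {ι R : Type*} [DecidableEq ι] [MulZeroOneClass R]
    (i : ι) : (range fun l : R => l • (Pi.single i 1 : ι → R)) = coordAxis i := by
  ext x
  constructor
  · rintro ⟨l, rfl⟩ k hk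
    simp [hk]
  · intro hx
    refine ⟨x i, funext fun k => ?_⟩
    rcases eq_or_ne k i with rfl | hk
    · simp
    · simp [hk, hx k hk]

theorem stmt_8_general {K : Type*} [Field K] (v : K → ℝ)
    (hnonneg : ∀ a : K, 0 ≤ v a)
    (hzero : ∀ a : K, v a = 0 ↔ a = 0)
    (hultra : ∀ a b : K, v (a + b) ≤ max (v a) (v b))
    (n : ℕ) (φ : (Fin n → K) → (Fin n → K)) (hbij : Function.Bijective φ)
    (hiso : ∀ x y : Fin n → K, ∑ i, v (φ x i - φ y i) = ∑ i, v (x i - y i))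
    (h0 : φ 0 = 0) :
    ∃ σ : Equiv.Perm (Fin n), ∀ i : Fin n,
      φ '' (Set.range fun l : K => l • (Pi.single i 1 : Fin n → K))
        = Set.range fun l : K => l • (Pi.single (σ i) 1 : Fin n → K) := by
  have hbtw : ∀ x m y, CoordwiseBtw (φ x) (φ m) (φ y) ↔ CoordwiseBtw x m y := fun x m y => by
    rw [← sum_add_sum_eq_sum_iff_coordwiseBtw hnonneg hzero hultra,
      ← sum_add_sum_eq_sum_iff_coordwiseBtw hnonneg hzero hultra, hiso, hiso, hiso]
  obtain ⟨σ, hσ⟩ :=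
    exists_perm_image_coordAxis_eq hbij (diffAtMostOne_map_iff hbij hbtw) h0
  exact ⟨σ, fun i => by simp only [range_smul_single_one_eq_coordAxis, hσ]⟩

/-- a centred bijective isometry of `(Kⁿ, ‖·‖₁)` permutes the
coordinate axes: there is a permutation `σ` with
`φ({λ eᵢ : λ ∈ K}) = {λ e_{σ i} : λ ∈ K}` for every `i`. -/
theorem stmt_8 {K : Type*} [Field K] (v : K → ℝ)
    (hnonneg : ∀ a : K, 0 ≤ v a)
    (hzero : ∀ a : K, v a = 0 ↔ a = 0)
    (hmul : ∀ a b : K, v (a * b) = v a * v b)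
    (hultra : ∀ a b : K, v (a + b) ≤ max (v a) (v b))
    (n : ℕ) (φ : (Fin n → K) → (Fin n → K)) (hbij : Function.Bijective φ)
    (hiso : ∀ x y : Fin n → K, ∑ i, v (φ x i - φ y i) = ∑ i, v (x i - y i))
    (h0 : φ 0 = 0) :
    ∃ σ : Equiv.Perm (Fin n), ∀ i : Fin n,
      φ '' (Set.range fun l : K => l • (Pi.single i 1 : Fin n → K))
        = Set.range fun l : K => l • (Pi.single (σ i) 1 : Fin n → K) :=
  stmt_8_general v hnonneg hzero hultra n φ hbij hiso h0
end
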